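/- arXiv:2505.12604 — 4 statements merged into one kernel-verified Lean document; each statement's English description precedes it below -/
import Mathlib

section
/- Let u : A → ℝ be a C² function on the closed annulus A = {x ∈ ℝⁿ : r₀ ≤ |x| ≤ r₁} with 0 < r₀ < r₁, and suppose the Hessian of u is bounded in operator norm by M on A. Then the function r ↦ sup_{|x|=r} u(x) + (M/2) r² is convex on [r₀, r₁]. -/
/-!
Along each ray `r ↦ r • ω` with `‖ω‖ = 1`, the second derivative of `r ↦ u (r • ω)` is
`D²u (r • ω) (ω, ω) ≥ -M`, so `r ↦ u (r • ω) + M / 2 * r ^ 2` is convex. Rescaling the unit sphere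
shows that `sSup (u '' sphere 0 r)` is the supremum over `ω` of `u (r • ω)`, and a pointwise
supremum of convex functions is convex; compactness of the spheres keeps the supremum finite.
-/

open Set Metric

theorem ConvexOn.ciSup {E ι : Type*} [AddCommMonoid E] [Module ℝ E] [Nonempty ι]
    {s : Set E} {f : ι → E → ℝ} (hf : ∀ i, ConvexOn ℝ s (f i))
    (hbdd : ∀ x ∈ s, BddAbove (range fun i => f i x)) :
    ConvexOn ℝ s fun x => ⨆ i, f i x := by
  refine ⟨(hf (Classical.arbitrary ι)).1, fun x hx y hy a b ha hb hab => ciSup_le fun i => ?_⟩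
  calc f i (a • x + b • y) ≤ a * f i x + b * f i y := (hf i).2 hx hy ha hb hab
    _ ≤ a * (⨆ i, f i x) + b * ⨆ i, f i y := by
      gcongr
      exacts [le_ciSup (hbdd x hx) i, le_ciSup (hbdd y hy) i]

section Normed

variable {E : Type*} [NormedAddCommGroup E] [NormedSpace ℝ E]

theorem sSup_image_sphere_zero_eq_iSup (u : E → ℝ) {r : ℝ} (hr : 0 < r) :
    sSup (u '' sphere (0 : E) r) = ⨆ ω : sphere (0 : E) 1, u (r • ω) := by
  have hsphere : (r • ·) '' sphere (0 : E) 1 = sphere 0 r := by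
    rw [image_smul, smul_sphere' hr.ne', smul_zero, Real.norm_of_nonneg hr.le, mul_one]
  rw [← sSup_image' (f := fun ω => u (r • ω)), ← hsphere, image_image]

theorem abs_fderiv_fderiv_apply_le {u : E → ℝ} {s : Set E} {x : E} (hs : s ∈ nhds x) (v w : E) :
    |fderiv ℝ (fderiv ℝ u) x v w| ≤ ‖iteratedFDerivWithin ℝ 2 u s x‖ * ‖v‖ * ‖w‖ := by
  rw [iteratedFDerivWithin_congr_set (Filter.eventuallyEq_univ.mpr hs), iteratedFDerivWithin_univ,
    ← Real.norm_eq_abs]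
  simpa [iteratedFDeriv_two_apply, Fin.prod_univ_two, mul_assoc] using
    (iteratedFDeriv ℝ 2 u x).le_opNorm ![v, w]

theorem convexOn_comp_line_add_sq {u : E → ℝ} {s : Set E} {M a b : ℝ} {x v : E} (hv : ‖v‖ = 1)
    (hu : ContDiffOn ℝ 2 u s) (hM : ∀ y ∈ interior s, ‖iteratedFDerivWithin ℝ 2 u s y‖ ≤ M)
    (hline : ∀ r ∈ Icc a b, x + r • v ∈ s) (hline' : ∀ r ∈ Ioo a b, x + r • v ∈ interior s) :
    ConvexOn ℝ (Icc a b) fun r => u (x + r • v) + M / 2 * r ^ 2 := by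
  have hγ (r : ℝ) : HasDerivAt (fun r : ℝ => x + r • v) v r := by
    simpa using ((hasDerivAt_id r).smul_const v).const_add x
  have hnhds (r : ℝ) (hr : r ∈ Ioo a b) : s ∈ nhds (x + r • v) :=
    mem_interior_iff_mem_nhds.mp (hline' r hr)
  refine convexOn_of_hasDerivWithinAt2_nonneg (convex_Icc a b)
    (f' := fun r => fderiv ℝ u (x + r • v) v + M * r)
    (f'' := fun r => fderiv ℝ (fderiv ℝ u) (x + r • v) v v + M) ?_ ?_ ?_ ?_
  · exact (hu.continuousOn.comp (by fun_prop) hline).add (by fun_prop)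
  all_goals intro r hr; rw [interior_Icc] at hr
  · have hu' : HasDerivAt (fun r => u (x + r • v)) (fderiv ℝ u (x + r • v) v) r :=
      ((hu.contDiffAt (hnhds r hr)).differentiableAt (by norm_num)).hasFDerivAt.comp_hasDerivAt r
        (hγ r)
    have hsq : HasDerivAt (fun r : ℝ => M / 2 * r ^ 2) (M * r) r :=
      (hasDerivAt_pow 2 r).const_mul (M / 2) |>.congr_deriv (by ring)
    exact (hu'.add hsq).hasDerivWithinAt
  · have hDu : DifferentiableAt ℝ (fderiv ℝ u) (x + r • v) :=
      ((hu.contDiffAt (hnhds r hr)).fderiv_right (m := 1) (by norm_num)).differentiableAt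
        (by norm_num)
    have hDu' : HasDerivAt (fun r => fderiv ℝ u (x + r • v)) (fderiv ℝ (fderiv ℝ u) (x + r • v) v)
        r := hDu.hasFDerivAt.comp_hasDerivAt r (hγ r)
    have hu'' : HasDerivAt (fun r => fderiv ℝ u (x + r • v) v)
        (fderiv ℝ (fderiv ℝ u) (x + r • v) v v) r := by
      simpa using hDu'.clm_apply (hasDerivAt_const r v)
    exact (hu''.add ((hasDerivAt_id r).const_mul M |>.congr_deriv (by ring))).hasDerivWithinAt
  · have hD2 := abs_fderiv_fderiv_apply_le (u := u) (hnhds r hr) v v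
    rw [hv, mul_one, mul_one] at hD2
    linarith [neg_abs_le (fderiv ℝ (fderiv ℝ u) (x + r • v) v v), hM _ (hline' r hr)]

theorem smul_mem_annulus {ω : E} (hω : ‖ω‖ = 1) {r₀ r₁ r : ℝ} (hr₀ : 0 ≤ r₀)
    (hr : r ∈ Icc r₀ r₁) : r • ω ∈ {x : E | r₀ ≤ ‖x‖ ∧ ‖x‖ ≤ r₁} := by
  rwa [mem_ofPred_eq, norm_smul_of_nonneg (hr₀.trans hr.1), hω, mul_one]

theorem convexOn_comp_smul_add_sq_of_annulus {u : E → ℝ} {r₀ r₁ M : ℝ} (hr₀ : 0 ≤ r₀)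
    {A : Set E} (hA : A = {x : E | r₀ ≤ ‖x‖ ∧ ‖x‖ ≤ r₁}) (hu : ContDiffOn ℝ 2 u A)
    (hM : ∀ x ∈ A, ‖iteratedFDerivWithin ℝ 2 u A x‖ ≤ M) {ω : E} (hω : ‖ω‖ = 1) :
    ConvexOn ℝ (Icc r₀ r₁) fun r => u (r • ω) + M / 2 * r ^ 2 := by
  have hopen : norm ⁻¹' Ioo r₀ r₁ ⊆ interior A :=
    interior_maximal (hA ▸ fun x hx => ⟨hx.1.le, hx.2.le⟩) (isOpen_Ioo.preimage continuous_norm)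
  have hinterior (r : ℝ) (hr : r ∈ Ioo r₀ r₁) : r • ω ∈ interior A := by
    refine hopen ?_
    rwa [mem_preimage, norm_smul_of_nonneg (hr₀.trans hr.1.le), hω, mul_one]
  simpa using convexOn_comp_line_add_sq (x := 0) hω hu (fun y hy => hM y (interior_subset hy))
    (by simpa [hA] using fun r hr => smul_mem_annulus hω hr₀ hr) (by simpa using hinterior)

end Normed

theorem sup_on_spheres_semiconvex_general (n : ℕ) (hn : 2 ≤ n)
    (u : EuclideanSpace ℝ (Fin n) → ℝ) (r₀ r₁ M : ℝ) (hr₀ : 0 < r₀)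
    (A : Set (EuclideanSpace ℝ (Fin n)))
    (hA : A = {x : EuclideanSpace ℝ (Fin n) | r₀ ≤ ‖x‖ ∧ ‖x‖ ≤ r₁})
    (hu : ContDiffOn ℝ 2 u A)
    (hM : ∀ x ∈ A, ‖iteratedFDerivWithin ℝ 2 u A x‖ ≤ M) :
    ConvexOn ℝ (Icc r₀ r₁)
      (fun r => sSup (u '' sphere (0 : EuclideanSpace ℝ (Fin n)) r) + M / 2 * r ^ 2) := by
  have : Nonempty (sphere (0 : EuclideanSpace ℝ (Fin n)) 1) :=
    have : Nonempty (Fin n) := ⟨⟨0, by omega⟩⟩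
    (NormedSpace.sphere_nonempty.mpr zero_le_one).to_subtype
  have hray (ω : sphere (0 : EuclideanSpace ℝ (Fin n)) 1) :=
    convexOn_comp_smul_add_sq_of_annulus hr₀.le hA hu hM (norm_eq_of_mem_sphere ω)
  have hbdd (r : ℝ) (hr : r ∈ Icc r₀ r₁) :
      BddAbove (range fun ω : sphere (0 : EuclideanSpace ℝ (Fin n)) 1 => u (r • ω)) :=
    (isCompact_range (hu.continuousOn.comp_continuous (by fun_prop)
      fun ω => hA ▸ smul_mem_annulus (norm_eq_of_mem_sphere ω) hr₀.le hr)).bddAbove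
  refine (ConvexOn.ciSup hray fun r hr => (hbdd r hr).range_add (by simp)).congr fun r hr => ?_
  rw [sSup_image_sphere_zero_eq_iSup u (hr₀.trans_le hr.1), ciSup_add (hbdd r hr)]

/-- If `u` is `C²` on the closed annulus `{x : r₀ ≤ |x| ≤ r₁}` with Hessian bounded
by `M` in operator norm, then `r ↦ sup_{|x|=r} u(x) + (M/2) r²` is convex on `[r₀, r₁]`. -/
theorem sup_on_spheres_semiconvex (n : ℕ) (hn : 2 ≤ n)
    (u : EuclideanSpace ℝ (Fin n) → ℝ) (r₀ r₁ M : ℝ) (hr₀ : 0 < r₀) (hr : r₀ < r₁)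
    (A : Set (EuclideanSpace ℝ (Fin n)))
    (hA : A = {x : EuclideanSpace ℝ (Fin n) | r₀ ≤ ‖x‖ ∧ ‖x‖ ≤ r₁})
    (hu : ContDiffOn ℝ 2 u A)
    (hM : ∀ x ∈ A, ‖iteratedFDerivWithin ℝ 2 u A x‖ ≤ M) :
    ConvexOn ℝ (Icc r₀ r₁)
      (fun r => sSup (u '' sphere (0 : EuclideanSpace ℝ (Fin n)) r) + M / 2 * r ^ 2) :=
  sup_on_spheres_semiconvex_general n hn u r₀ r₁ M hr₀ A hA hu hM
end

section
/- Let u : A → ℝ be a C² function on the closed annulus A = {x ∈ ℝⁿ : r₀ ≤ |x| ≤ r₁} with 0 < r₀ < r₁, and suppose the Hessian of u is bounded in operator norm by M on A. Then the function r ↦ inf_{|x|=r} u(x) - (M/2) r² is concave on [r₀, r₁]. -/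
/-!
Along a ray `t ↦ t • e` with `‖e‖ = 1` the second derivative of `u` is `D²u (t • e) (e, e) ≤ M`,
so `t ↦ u (t • e) - M t² / 2` is concave. For `c ∈ [r₀, r₁]` choose `e` so that `c • e` minimizes
`u` on the sphere of radius `c`: this concave function lies above `r ↦ inf_{|x|=r} u - M r² / 2`
and touches it at `c`, and a function touched from above at every point by concave functions
is concave.
-/

open Set Metric Topology

theorem iteratedFDerivWithin_of_mem_nhds {𝕜 E F : Type*} [NontriviallyNormedField 𝕜]
    [NormedAddCommGroup E] [NormedSpace 𝕜 E] [NormedAddCommGroup F] [NormedSpace 𝕜 F]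
    {f : E → F} {s : Set E} {x : E} (h : s ∈ 𝓝 x) (n : ℕ) :
    iteratedFDerivWithin 𝕜 n f s x = iteratedFDeriv 𝕜 n f x := by
  rw [← iteratedFDerivWithin_univ]
  exact iteratedFDerivWithin_congr_set (Filter.eventuallyEq_univ.2 h) n

theorem ConcaveOn.of_forall_exists_concaveOn_ge {𝕜 E β : Type*} [Semiring 𝕜] [PartialOrder 𝕜]
    [IsOrderedRing 𝕜] [AddCommMonoid E] [Module 𝕜 E] [AddCommMonoid β] [PartialOrder β]
    [IsOrderedAddMonoid β] [Module 𝕜 β] [PosSMulMono 𝕜 β] {D : Set E} (hD : Convex 𝕜 D)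
    {f : E → β} (h : ∀ c ∈ D, ∃ g : E → β, ConcaveOn 𝕜 D g ∧ (∀ x ∈ D, f x ≤ g x) ∧ g c = f c) :
    ConcaveOn 𝕜 D f := by
  refine ⟨hD, fun a ha b hb s t hs ht hst => ?_⟩
  obtain ⟨g, hg, hfg, hgc⟩ := h _ (hD ha hb hs ht hst)
  calc s • f a + t • f b ≤ s • g a + t • g b := by
        gcongr
        exacts [hfg a ha, hfg b hb]
    _ ≤ g (s • a + t • b) := hg.2 ha hb hs ht hst
    _ = f (s • a + t • b) := hgc

theorem concaveOn_sub_mul_sq_of_iteratedDeriv_two_le {D : Set ℝ} (hD : Convex ℝ D)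
    {φ : ℝ → ℝ} {M : ℝ} (hφ : ContinuousOn φ D) (hφ2 : ContDiffOn ℝ 2 φ (interior D))
    (hM : ∀ x ∈ interior D, iteratedDeriv 2 φ x ≤ M) :
    ConcaveOn ℝ D fun x => φ x - M / 2 * x ^ 2 := by
  have hψ : ContDiffOn ℝ 2 (fun x => φ x - M / 2 * x ^ 2) (interior D) :=
    hφ2.sub (by fun_prop)
  refine concaveOn_of_deriv2_nonpos hD (hφ.sub (by fun_prop)) (hψ.differentiableOn two_ne_zero)
    ((hψ.deriv_of_isOpen isOpen_interior le_rfl).differentiableOn one_ne_zero) fun x hx => ?_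
  have hφx : ContDiffAt ℝ 2 φ x := hφ2.contDiffAt (isOpen_interior.mem_nhds hx)
  have hquad : iteratedDeriv 2 (fun x : ℝ => M / 2 * x ^ 2) x = M := by simp
  rw [← iteratedDeriv_eq_iterate, iteratedDeriv_fun_sub hφx (by fun_prop), hquad]
  exact sub_nonpos.2 (hM x hx)

theorem iteratedDeriv_two_comp_smul {E F : Type*} [NormedAddCommGroup E] [NormedSpace ℝ E]
    [NormedAddCommGroup F] [NormedSpace ℝ F] {u : E → F} {e : E} {r : ℝ}
    (hu : ContDiffAt ℝ 2 u (r • e)) :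
    iteratedDeriv 2 (fun t : ℝ => u (t • e)) r = iteratedFDeriv ℝ 2 u (r • e) fun _ => e := by
  obtain ⟨U, hU, hrU, huU⟩ := hu.contDiffOn' le_rfl (by simp)
  let g : ℝ →L[ℝ] E := .toSpanSingleton ℝ e
  have hgU : IsOpen (g ⁻¹' U) := hU.preimage g.continuous
  rw [iteratedDeriv_eq_iteratedFDeriv, ← iteratedFDerivWithin_of_isOpen 2 hU hrU,
    show (fun t : ℝ => u (t • e)) = u ∘ g from rfl,
    ← iteratedFDerivWithin_of_isOpen 2 hgU hrU,
    g.iteratedFDerivWithin_comp_right (huU.mono fun _ hy => ⟨mem_insert_of_mem _ trivial, hy⟩)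
      hU.uniqueDiffOn hgU.uniqueDiffOn hrU le_rfl]
  simp [g]

theorem concaveOn_comp_smul_sub_mul_sq {E : Type*} [NormedAddCommGroup E] [NormedSpace ℝ E]
    {u : E → ℝ} {A : Set E} {e : E} (he : ‖e‖ = 1) {r₀ r₁ M : ℝ} (hu : ContinuousOn u A)
    (hu2 : ContDiffOn ℝ 2 u (interior A)) (hM : ∀ x ∈ interior A, ‖iteratedFDeriv ℝ 2 u x‖ ≤ M)
    (hA : ∀ r ∈ Icc r₀ r₁, r • e ∈ A) (hA' : ∀ r ∈ Ioo r₀ r₁, r • e ∈ interior A) :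
    ConcaveOn ℝ (Icc r₀ r₁) fun r => u (r • e) - M / 2 * r ^ 2 := by
  have hray : ContDiff ℝ 2 fun r : ℝ => r • e := contDiff_id.smul contDiff_const
  refine concaveOn_sub_mul_sq_of_iteratedDeriv_two_le (convex_Icc r₀ r₁)
    (hu.comp hray.continuous.continuousOn hA) ?_ fun r hr => ?_ <;> rw [interior_Icc] at *
  · exact hu2.comp hray.contDiffOn hA'
  rw [iteratedDeriv_two_comp_smul (hu2.contDiffAt (isOpen_interior.mem_nhds (hA' r hr)))]
  calc (iteratedFDeriv ℝ 2 u (r • e) fun _ => e)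
      ≤ ‖iteratedFDeriv ℝ 2 u (r • e) fun _ => e‖ := Real.le_norm_self _
    _ ≤ ‖iteratedFDeriv ℝ 2 u (r • e)‖ * ∏ _i : Fin 2, ‖e‖ :=
        ContinuousMultilinearMap.le_opNorm _ _
    _ ≤ M := by simpa [he] using hM _ (hA' r hr)

theorem exists_norm_eq_one_sInf_image_sphere_eq {E : Type*} [NormedAddCommGroup E]
    [NormedSpace ℝ E] [ProperSpace E] [Nontrivial E] {u : E → ℝ} {c : ℝ} (hc : 0 < c)
    (hu : ContinuousOn u (sphere 0 c)) :
    ∃ e : E, ‖e‖ = 1 ∧ sInf (u '' sphere 0 c) = u (c • e) := by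
  obtain ⟨x, hx, hux⟩ := (isCompact_sphere 0 c).exists_sInf_image_eq
    (NormedSpace.sphere_nonempty.2 hc.le) hu
  refine ⟨c⁻¹ • x, ?_, by rw [hux, smul_inv_smul₀ hc.ne']⟩
  rw [norm_smul, mem_sphere_zero_iff_norm.1 hx, norm_inv, Real.norm_of_nonneg hc.le,
    inv_mul_cancel₀ hc.ne']

theorem inf_on_spheres_semiconcave_general (n : ℕ) (hn : 2 ≤ n)
    (u : EuclideanSpace ℝ (Fin n) → ℝ) (r₀ r₁ M : ℝ) (hr₀ : 0 < r₀)
    (A : Set (EuclideanSpace ℝ (Fin n)))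
    (hA : A = {x : EuclideanSpace ℝ (Fin n) | r₀ ≤ ‖x‖ ∧ ‖x‖ ≤ r₁})
    (hu : ContDiffOn ℝ 2 u A)
    (hM : ∀ x ∈ A, ‖iteratedFDerivWithin ℝ 2 u A x‖ ≤ M) :
    ConcaveOn ℝ (Icc r₀ r₁)
      (fun r => sInf (u '' sphere (0 : EuclideanSpace ℝ (Fin n)) r) - M / 2 * r ^ 2) := by
  have : Nonempty (Fin n) := ⟨⟨0, by omega⟩⟩
  have hsphere : ∀ r ∈ Icc r₀ r₁, sphere 0 r ⊆ A := fun r hr x hx => by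
    rwa [hA, mem_ofPred_eq, mem_sphere_zero_iff_norm.1 hx]
  have hopen : {x | r₀ < ‖x‖ ∧ ‖x‖ < r₁} ⊆ interior A :=
    interior_maximal (fun x hx => hA ▸ ⟨hx.1.le, hx.2.le⟩)
      ((isOpen_lt continuous_const continuous_norm).inter
        (isOpen_lt continuous_norm continuous_const))
  have hM' : ∀ x ∈ interior A, ‖iteratedFDeriv ℝ 2 u x‖ ≤ M := fun x hx => by
    rw [← iteratedFDerivWithin_of_mem_nhds (mem_interior_iff_mem_nhds.1 hx)]
    exact hM x (interior_subset hx)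
  refine ConcaveOn.of_forall_exists_concaveOn_ge (convex_Icc r₀ r₁) fun c hc => ?_
  obtain ⟨e, he, hce⟩ := exists_norm_eq_one_sInf_image_sphere_eq (hr₀.trans_le hc.1)
    (hu.continuousOn.mono (hsphere c hc))
  have hre : ∀ r, r₀ ≤ r → r • e ∈ sphere 0 r := fun r hr => mem_sphere_zero_iff_norm.2 <| by
    rw [norm_smul_of_nonneg (hr₀.le.trans hr), he, mul_one]
  refine ⟨fun r => u (r • e) - M / 2 * r ^ 2,
    concaveOn_comp_smul_sub_mul_sq he hu.continuousOn (hu.mono interior_subset) hM'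
      (fun r hr => hsphere r hr (hre r hr.1)) (fun r hr => hopen ?_), fun r hr => ?_, by simp [hce]⟩
  · rwa [mem_ofPred_eq, mem_sphere_zero_iff_norm.1 (hre r hr.1.le)]
  · exact sub_le_sub_right (csInf_le ((isCompact_sphere 0 r).bddBelow_image
      (hu.continuousOn.mono (hsphere r hr))) (mem_image_of_mem u (hre r hr.1))) _

/-- If `u` is `C²` on the closed annulus `{x : r₀ ≤ |x| ≤ r₁}` with Hessian bounded
by `M` in operator norm, then `r ↦ inf_{|x|=r} u(x) - (M/2) r²` is concave on `[r₀, r₁]`. -/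
theorem inf_on_spheres_semiconcave (n : ℕ) (hn : 2 ≤ n)
    (u : EuclideanSpace ℝ (Fin n) → ℝ) (r₀ r₁ M : ℝ) (hr₀ : 0 < r₀) (hr : r₀ < r₁)
    (A : Set (EuclideanSpace ℝ (Fin n)))
    (hA : A = {x : EuclideanSpace ℝ (Fin n) | r₀ ≤ ‖x‖ ∧ ‖x‖ ≤ r₁})
    (hu : ContDiffOn ℝ 2 u A)
    (hM : ∀ x ∈ A, ‖iteratedFDerivWithin ℝ 2 u A x‖ ≤ M) :
    ConcaveOn ℝ (Icc r₀ r₁)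
      (fun r => sInf (u '' sphere (0 : EuclideanSpace ℝ (Fin n)) r) - M / 2 * r ^ 2) :=
  inf_on_spheres_semiconcave_general n hn u r₀ r₁ M hr₀ A hA hu hM
end

section
/- Let 1 < p < n, η = (n-p)/(p-1), and q = n(p-1)/(n-p). Let u be a positive C² radial function of r = |x| on an annulus, and under the change of variables t = η log(η/r), w(t) = (r/η)^η u(r), z(t) = w'(t), suppose w + z > 0 at a point t₀ where w is twice differentiable. If -Δ_p u ≤ u^q at the corresponding radius (as a radial expression), then z'(t₀) ≥ -z(t₀) - w(t₀)^q / ((p-1)(w(t₀)+z(t₀))^{p-2}). -/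
/-!
Put `r = η e^{-t/η}` and `u(r) = e^t w(t)`. Then `u'(r) = -e^{t + t/η} (w + w')`, and since
`η (p - 1) = n - p` all powers of `e^t` cancel in the radial flux:
`r^{n-1} |u'|^{p-2} u' = -η^{n-1} (w + w')^{p-1}` wherever `w + w' > 0`.
Differentiating this identity in `t` by the chain rule gives
`r^{1-n} (r^{n-1} |u'|^{p-2} u')' = e^{qt} (p - 1) (w + w')^{p-2} (w' + w'')` with `q = n/η`,
while `u^q = e^{qt} w^q`; dividing `-Δ_p u ≤ u^q` by `e^{qt}` gives the claim.
-/

open Set Real Filter Topology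

namespace EmdenFowler

noncomputable def radius (η t : ℝ) : ℝ := η * exp (-t / η)

noncomputable def transform (η : ℝ) (U : ℝ → ℝ) (t : ℝ) : ℝ := exp (-t) * U (radius η t)

variable {η : ℝ}

lemma radius_pos (hη : 0 < η) (t : ℝ) : 0 < radius η t := mul_pos hη (exp_pos _)

lemma hasDerivAt_radius (hη : η ≠ 0) (t : ℝ) : HasDerivAt (radius η) (-exp (-t / η)) t := by
  refine ((((hasDerivAt_id t).neg.div_const η).exp).const_mul η).congr_deriv ?_
  simp only [Pi.neg_apply, id_eq]
  field_simp

lemma hasDerivAt_transform (hη : η ≠ 0) {U : ℝ → ℝ} {t u' : ℝ}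
    (hU : HasDerivAt U u' (radius η t)) :
    HasDerivAt (transform η U) (-transform η U t - exp (-(t + t / η)) * u') t := by
  refine (((hasDerivAt_neg t).exp).mul (hU.comp t (hasDerivAt_radius hη t))).congr_deriv ?_
  rw [Function.comp_apply, transform, neg_add, exp_add, neg_div]
  ring

lemma rpow_comp_radius_eq {U : ℝ → ℝ} {t : ℝ} (hU : 0 ≤ U (radius η t)) (q : ℝ) :
    U (radius η t) ^ q = exp (t * q) * transform η U t ^ q := by
  rw [transform, mul_rpow (exp_pos _).le hU, ← exp_mul, ← mul_assoc, ← exp_add,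
    show t * q + -t * q = 0 by ring, exp_zero, one_mul]

section Regularity

variable {U : ℝ → ℝ} {t₀ : ℝ}

lemma deriv_transform_eventuallyEq (hη : η ≠ 0)
    (hU : ∀ᶠ r in 𝓝 (radius η t₀), DifferentiableAt ℝ U r) :
    deriv (transform η U) =ᶠ[𝓝 t₀]
      fun t => -transform η U t - exp (-(t + t / η)) * deriv U (radius η t) := by
  filter_upwards [(hasDerivAt_radius hη t₀).continuousAt.eventually hU] with t ht
  exact (hasDerivAt_transform hη ht.hasDerivAt).deriv

lemma deriv_comp_radius_eventuallyEq (hη : η ≠ 0)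
    (hU : ∀ᶠ r in 𝓝 (radius η t₀), DifferentiableAt ℝ U r) :
    ∀ᶠ t in 𝓝 t₀,
      deriv U (radius η t) = -(exp (t + t / η) * (transform η U t + deriv (transform η U) t)) := by
  filter_upwards [deriv_transform_eventuallyEq hη hU] with t ht
  rw [ht, exp_neg]
  field_simp
  ring

lemma differentiableAt_deriv_transform (hη : η ≠ 0)
    (hU : ∀ᶠ r in 𝓝 (radius η t₀), DifferentiableAt ℝ U r)
    (hU' : DifferentiableAt ℝ (deriv U) (radius η t₀)) :
    DifferentiableAt ℝ (deriv (transform η U)) t₀ := by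
  rw [(deriv_transform_eventuallyEq hη hU).differentiableAt_iff]
  have hw : DifferentiableAt ℝ (transform η U) t₀ :=
    (hasDerivAt_transform hη hU.self_of_nhds.hasDerivAt).differentiableAt
  have hU'R : DifferentiableAt ℝ (deriv U ∘ radius η) t₀ :=
    hU'.comp t₀ (hasDerivAt_radius hη t₀).differentiableAt
  exact hw.neg.sub ((by fun_prop : DifferentiableAt ℝ _ t₀).mul hU'R)

end Regularity

lemma abs_rpow_sub_two_mul_self_of_neg (p : ℝ) {y : ℝ} (hy : y < 0) :
    |y| ^ (p - 2) * y = -(-y) ^ (p - 1) := by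
  rw [abs_of_neg hy, show p - 1 = (p - 2) + 1 by ring, rpow_add (neg_pos.mpr hy), rpow_one]
  ring

variable {n p : ℝ}

lemma radius_rpow_mul_abs_rpow_mul (hη : 0 < η) (hrel : η * (p - 1) = n - p)
    (t : ℝ) {y : ℝ} (hy : 0 < y) :
    radius η t ^ (n - 1) * |-(exp (t + t / η) * y)| ^ (p - 2) * -(exp (t + t / η) * y)
      = -(η ^ (n - 1) * y ^ (p - 1)) := by
  have hexp : (-t / η) * (n - 1) + (t + t / η) * (p - 1) = 0 := by
    field_simp
    linear_combination t * hrel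
  rw [radius, mul_assoc, abs_rpow_sub_two_mul_self_of_neg p (neg_neg_of_pos (by positivity)),
    neg_neg, mul_rpow hη.le (exp_pos _).le, mul_rpow (exp_pos _).le hy.le, ← exp_mul, ← exp_mul]
  calc _ = -(η ^ (n - 1) * y ^ (p - 1) * exp ((-t / η) * (n - 1) + (t + t / η) * (p - 1))) := by
        rw [exp_add]; ring
    _ = _ := by rw [hexp, exp_zero, mul_one]

lemma radius_rpow_one_sub_mul_eq {t D K : ℝ} (hη : 0 < η)
    (hD : D * -exp (-t / η) = -(η ^ (n - 1) * K)) :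
    radius η t ^ (1 - n) * D = exp (t * (n / η)) * K := by
  have hD' : D = η ^ (n - 1) * K * exp (t / η) := by
    rw [neg_div, exp_neg] at hD
    field_simp at hD
    linear_combination -hD
  rw [radius, hD', mul_rpow hη.le (exp_pos _).le, ← exp_mul]
  calc _ = (η ^ (1 - n) * η ^ (n - 1)) * exp (-t / η * (1 - n) + t / η) * K := by
        rw [exp_add]; ring
    _ = _ := by
        rw [← rpow_add hη, show 1 - n + (n - 1) = 0 by ring, rpow_zero, one_mul]
        congr 2
        field_simp
        ring

lemma radius_rpow_one_sub_mul_deriv_flux (hη : 0 < η) (hrel : η * (p - 1) = n - p)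
    {w z g : ℝ → ℝ} {t₀ z' : ℝ} (hw : HasDerivAt w (z t₀) t₀) (hz : HasDerivAt z z' t₀)
    (hwz : 0 < w t₀ + z t₀) (hg : DifferentiableAt ℝ g (radius η t₀))
    (hgwz : ∀ᶠ t in 𝓝 t₀, g (radius η t) = -(exp (t + t / η) * (w t + z t))) :
    radius η t₀ ^ (1 - n) * deriv (fun r => r ^ (n - 1) * |g r| ^ (p - 2) * g r) (radius η t₀)
      = exp (t₀ * (n / η)) * ((p - 1) * (w t₀ + z t₀) ^ (p - 2) * (z t₀ + z')) := by
  set F : ℝ → ℝ := fun r => r ^ (n - 1) * |g r| ^ (p - 2) * g r with hF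
  have hwz_pos : ∀ᶠ t in 𝓝 t₀, 0 < w t + z t :=
    (hw.continuousAt.add hz.continuousAt).eventually (lt_mem_nhds hwz)
  have hflux : F ∘ radius η =ᶠ[𝓝 t₀] fun t => -(η ^ (n - 1) * (w t + z t) ^ (p - 1)) := by
    filter_upwards [hgwz, hwz_pos] with t hgt hpos
    simp only [Function.comp_apply, hF, hgt]
    exact radius_rpow_mul_abs_rpow_mul hη hrel t hpos
  have hg_ne : g (radius η t₀) ≠ 0 := by
    rw [hgwz.self_of_nhds]
    exact neg_ne_zero.mpr (by positivity)
  have hF_diff : DifferentiableAt ℝ F (radius η t₀) :=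
    ((differentiableAt_id.rpow_const (Or.inl (radius_pos hη t₀).ne')).mul
      ((hg.abs hg_ne).rpow_const (Or.inl (abs_ne_zero.mpr hg_ne)))).mul hg
  have h_chain : HasDerivAt (F ∘ radius η) (deriv F (radius η t₀) * -exp (-t₀ / η)) t₀ :=
    hF_diff.hasDerivAt.comp t₀ (hasDerivAt_radius hη.ne' t₀)
  have h_direct := ((((hw.add hz).rpow_const (Or.inl hwz.ne')).const_mul
    (η ^ (n - 1))).neg).congr_of_eventuallyEq hflux
  exact radius_rpow_one_sub_mul_eq hη ((h_chain.unique h_direct).trans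
    (by rw [Pi.add_apply, sub_sub, one_add_one_eq_two]; ring))

end EmdenFowler

open EmdenFowler

theorem radial_ode_transform_general (n : ℕ) (p q η : ℝ)
    (hp1 : 1 < p) (hpn : p < n)
    (hη : η = ((n : ℝ) - p) / (p - 1)) (hq : q = (n : ℝ) * (p - 1) / ((n : ℝ) - p))
    (a b : ℝ)
    (U : ℝ → ℝ) (hU : ContDiffOn ℝ 2 U (Ioo a b)) (hUpos : ∀ r ∈ Ioo a b, 0 < U r)
    (w z : ℝ → ℝ)
    (hw : w = fun t => Real.exp (-t) * U (η * Real.exp (-t / η)))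
    (hz : z = deriv w)
    (t₀ r₀ : ℝ) (hr₀ : r₀ = η * Real.exp (-t₀ / η)) (hr₀mem : r₀ ∈ Ioo a b)
    (hwz : 0 < w t₀ + z t₀)
    (hineq : -(r₀ ^ ((1 : ℝ) - n) *
        deriv (fun r => r ^ ((n : ℝ) - 1) * |deriv U r| ^ (p - 2) * deriv U r) r₀)
      ≤ U r₀ ^ q) :
    deriv z t₀ ≥ -z t₀ - w t₀ ^ q / ((p - 1) * (w t₀ + z t₀) ^ (p - 2)) := by
  have hp0 : 0 < p - 1 := by linarith
  have hη0 : 0 < η := by rw [hη]; exact div_pos (by linarith) hp0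
  have hrel : η * (p - 1) = n - p := by rw [hη, div_mul_cancel₀ _ hp0.ne']
  have hq' : q = n / η := by rw [hq, hη]; field_simp
  obtain rfl : w = transform η U := hw
  obtain rfl : z = deriv (transform η U) := hz
  obtain rfl : r₀ = radius η t₀ := hr₀
  have hU_diff : ∀ᶠ r in 𝓝 (radius η t₀), DifferentiableAt ℝ U r := by
    filter_upwards [isOpen_Ioo.mem_nhds hr₀mem] with r hr
    exact (hU.differentiableOn (by norm_num)).differentiableAt (isOpen_Ioo.mem_nhds hr)
  have hU'_diff : DifferentiableAt ℝ (deriv U) (radius η t₀) :=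
    ((hU.deriv_of_isOpen isOpen_Ioo (by norm_num)).differentiableOn one_ne_zero).differentiableAt
      (isOpen_Ioo.mem_nhds hr₀mem)
  have hK := radius_rpow_one_sub_mul_deriv_flux hη0 hrel
    (hasDerivAt_transform hη0.ne' hU_diff.self_of_nhds.hasDerivAt).differentiableAt.hasDerivAt
    (differentiableAt_deriv_transform hη0.ne' hU_diff hU'_diff).hasDerivAt hwz hU'_diff
    (deriv_comp_radius_eventuallyEq hη0.ne' hU_diff)
  rw [hK, ← hq', rpow_comp_radius_eq (hUpos _ hr₀mem).le, ← mul_neg] at hineq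
  have hA := mul_pos hp0 (rpow_pos_of_pos hwz (p - 2))
  have hbound := div_le_div_of_nonneg_right (le_of_mul_le_mul_left hineq (exp_pos _)) hA.le
  rw [neg_div, mul_div_cancel_left₀ _ hA.ne'] at hbound
  linarith

/-- Under the change of variables `t = η log(η/r)`, `u(r) = e^t w(t)`, the radial differential
inequality `-Δ_p u ≤ u^q` transforms into the first-order inequality
`z' ≥ -z - w^q / ((p-1)(w+z)^{p-2})` for `z = w'`, wherever `w + z > 0`. -/
theorem radial_ode_transform (n : ℕ) (hn : 2 ≤ n) (p q η : ℝ)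
    (hp1 : 1 < p) (hpn : p < n)
    (hη : η = ((n : ℝ) - p) / (p - 1)) (hq : q = (n : ℝ) * (p - 1) / ((n : ℝ) - p))
    (a b : ℝ) (ha : 0 < a) (hab : a < b)
    (U : ℝ → ℝ) (hU : ContDiffOn ℝ 2 U (Ioo a b)) (hUpos : ∀ r ∈ Ioo a b, 0 < U r)
    (w z : ℝ → ℝ)
    (hw : w = fun t => Real.exp (-t) * U (η * Real.exp (-t / η)))
    (hz : z = deriv w)
    (t₀ r₀ : ℝ) (hr₀ : r₀ = η * Real.exp (-t₀ / η)) (hr₀mem : r₀ ∈ Ioo a b)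
    (hwz : 0 < w t₀ + z t₀)
    (hineq : -(r₀ ^ ((1 : ℝ) - n) *
        deriv (fun r => r ^ ((n : ℝ) - 1) * |deriv U r| ^ (p - 2) * deriv U r) r₀)
      ≤ U r₀ ^ q) :
    deriv z t₀ ≥ -z t₀ - w t₀ ^ q / ((p - 1) * (w t₀ + z t₀) ^ (p - 2)) :=
  radial_ode_transform_general n p q η hp1 hpn hη hq a b U hU hUpos w z hw hz t₀ r₀ hr₀ hr₀mem hwz
    hineq
end

section
/- Let 1 < p < n, q = n(p-1)/(n-p) (so q - p + 1 = p(p-1)/(n-p) > 0). Fix ε ∈ (0,1) small, set k = 1/((p-1)(1-ε)) and δ = min{1/(2^p|p-2|), 1/(4(q-p+2))}·ε (with the first entry interpreted as +∞ when p = 2). If 0 < w ≤ (δ/k)^{(n-p)/(p(p-1))} and z = -k w^{q-p+2}, then the tangent-slope comparison holds: -1 + (1-ε)/|1 - k w^{q-p+1}|^{p-2} ≤ -ε/2 < -ε/4 ≤ -k(q-p+2) w^{q-p+1}. That is, the slope of the vector field along the barrier curve z = -k w^{q-p+2} is strictly below the slope of the barrier curve itself. -/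
/-!
Put `t = k w^{q-p+1}`. The exponent `(n-p)/(p(p-1))` is exactly `1/(q-p+1)`, so the constraint on
`w` says `t ≤ δ`, and the choice of `δ` gives `(q-p+2) t ≤ ε/4` (the right-hand inequality) and,
when `p > 2`, `(p-2) t ≤ ε/4`. The latter, through the Bernoulli-type bound
`(1-t)^a ≥ 1 - a t/(1-t) ≥ 1 - 2 a t` for `t ≤ 1/2`, yields `(1-t)^{p-2} ≥ 1 - ε/2`, which is
trivial for `p ≤ 2`; then `1 - ε ≤ (1-ε/2)²` gives the left-hand inequality.
-/

open Real

/-- The constant `δ` of the statement, with the `p = 2` branch in place of `1/(2^p |p-2|) = +∞`. -/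
noncomputable def barrierDelta (p q ε : ℝ) : ℝ :=
  (if p = 2 then 1 / (4 * (q - p + 2))
    else min (1 / (2 ^ p * |p - 2|)) (1 / (4 * (q - p + 2)))) * ε

section barrierDelta

variable {p q ε : ℝ}

lemma barrierDelta_nonneg (hε : 0 ≤ ε) (hq : 0 < q - p + 2) : 0 ≤ barrierDelta p q ε := by
  unfold barrierDelta
  split_ifs
  · positivity
  · exact mul_nonneg (le_min (by positivity) (by positivity)) hε

lemma barrierDelta_le (hε : 0 ≤ ε) : barrierDelta p q ε ≤ ε / (4 * (q - p + 2)) := by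
  rw [div_eq_inv_mul, ← one_div]
  unfold barrierDelta
  split_ifs
  · rfl
  · exact mul_le_mul_of_nonneg_right (min_le_right _ _) hε

lemma sub_two_mul_le_of_le_barrierDelta (hε : 0 ≤ ε) {t : ℝ} (ht0 : 0 ≤ t)
    (ht : t ≤ barrierDelta p q ε) : (p - 2) * t ≤ ε / 4 := by
  rcases le_or_gt p 2 with hp | hp
  · nlinarith
  have hδ : barrierDelta p q ε ≤ ε / (2 ^ p * (p - 2)) := by
    rw [div_eq_inv_mul, ← one_div, ← abs_of_pos (sub_pos.2 hp)]
    unfold barrierDelta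
    rw [if_neg hp.ne']
    exact mul_le_mul_of_nonneg_right (min_le_left _ _) hε
  have h2p : (4 : ℝ) ≤ 2 ^ p := by
    have := rpow_le_rpow_of_exponent_le (by norm_num : (1 : ℝ) ≤ 2) hp.le
    rwa [rpow_two, show (2 : ℝ) ^ 2 = 4 by norm_num] at this
  calc (p - 2) * t ≤ (p - 2) * (ε / (2 ^ p * (p - 2))) := by gcongr; linarith
    _ = ε / 2 ^ p := by field_simp
    _ ≤ ε / 4 := div_le_div_of_nonneg_left hε (by norm_num) h2p

end barrierDelta

lemma one_sub_mul_div_le_rpow_one_sub {t a : ℝ} (ht : t < 1) (ha : 0 ≤ a) :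
    1 - a * (t / (1 - t)) ≤ (1 - t) ^ a := by
  have h1t : 0 < 1 - t := sub_pos.2 ht
  have hlog : -(t / (1 - t)) ≤ log (1 - t) := by
    have := one_sub_inv_le_log_of_pos h1t
    rwa [show 1 - (1 - t)⁻¹ = -(t / (1 - t)) by field_simp; ring] at this
  calc 1 - a * (t / (1 - t)) ≤ log (1 - t) * a + 1 := by nlinarith
    _ ≤ exp (log (1 - t) * a) := add_one_le_exp _
    _ = (1 - t) ^ a := (rpow_def_of_pos h1t a).symm

lemma one_sub_half_le_rpow_sub_two {p t ε : ℝ} (hε : 0 ≤ ε) (ht0 : 0 ≤ t) (ht : t ≤ 1 / 2)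
    (hpt : (p - 2) * t ≤ ε / 4) : 1 - ε / 2 ≤ (1 - t) ^ (p - 2) := by
  rcases le_or_gt p 2 with hp | hp
  · linarith [one_le_rpow_of_pos_of_le_one_of_nonpos (by linarith : 0 < 1 - t) (by linarith)
      (by linarith : p - 2 ≤ 0)]
  have hdiv : t / (1 - t) ≤ 2 * t := by
    rw [div_le_iff₀ (by linarith)]; nlinarith
  calc 1 - ε / 2 ≤ 1 - (p - 2) * (t / (1 - t)) := by nlinarith
    _ ≤ (1 - t) ^ (p - 2) := one_sub_mul_div_le_rpow_one_sub (by linarith) (by linarith)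

lemma neg_one_add_div_le_neg_half {ε X : ℝ} (hε : ε < 2) (hX : 1 - ε / 2 ≤ X) :
    -1 + (1 - ε) / X ≤ -ε / 2 := by
  have hX0 : 0 < X := by linarith
  have : (1 - ε) / X ≤ 1 - ε / 2 := by
    rw [div_le_iff₀ hX0]
    nlinarith [mul_le_mul_of_nonneg_left hX (by linarith : 0 ≤ 1 - ε / 2), sq_nonneg ε]
  linarith

lemma sub_add_one_eq_of_eq_div {n p q : ℝ} (hpn : p < n) (hq : q = n * (p - 1) / (n - p)) :
    q - p + 1 = p * (p - 1) / (n - p) := by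
  rw [hq]; field_simp [(sub_pos.2 hpn).ne']; ring

theorem barrier_slope_comparison_general (n : ℕ) (p q ε k δ : ℝ)
    (hp1 : 1 < p) (hpn : p < n)
    (hq : q = (n : ℝ) * (p - 1) / ((n : ℝ) - p))
    (hε0 : 0 < ε) (hε1 : ε < 1)
    (hk : k = 1 / ((p - 1) * (1 - ε)))
    (hδ : δ = (if p = 2 then 1 / (4 * (q - p + 2))
        else min (1 / (2 ^ p * |p - 2|)) (1 / (4 * (q - p + 2)))) * ε)
    (w : ℝ) (hw0 : 0 < w)
    (hw1 : w ≤ (δ / k) ^ (((n : ℝ) - p) / (p * (p - 1)))) :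
    -1 + (1 - ε) / |1 - k * w ^ (q - p + 1)| ^ (p - 2) ≤ -ε / 2 ∧
    -ε / 2 < -ε / 4 ∧
    -ε / 4 ≤ -k * (q - p + 2) * w ^ (q - p + 1) := by
  have hs := sub_add_one_eq_of_eq_div hpn hq
  have hs0 : 0 < q - p + 1 := by rw [hs]; have := sub_pos.2 hpn; positivity
  have hk0 : 0 < k := by rw [hk]; have := sub_pos.2 hε1; positivity
  obtain rfl : δ = barrierDelta p q ε := hδ
  have hδ0 := barrierDelta_nonneg hε0.le (p := p) (q := q) (by linarith)
  have hwδ : w ^ (q - p + 1) ≤ barrierDelta p q ε / k := by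
    rwa [show ((n : ℝ) - p) / (p * (p - 1)) = (q - p + 1)⁻¹ by rw [hs, inv_div],
      le_rpow_inv_iff_of_pos hw0.le (by positivity) hs0] at hw1
  set t := k * w ^ (q - p + 1)
  have ht0 : 0 < t := by positivity
  have htδ : t ≤ barrierDelta p q ε := by rwa [le_div_iff₀' hk0] at hwδ
  have hqt : (q - p + 2) * t ≤ ε / 4 := by
    have := barrierDelta_le hε0.le (p := p) (q := q)
    rw [le_div_iff₀' (by linarith)] at this
    nlinarith
  have hpt := sub_two_mul_le_of_le_barrierDelta hε0.le ht0.le htδ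
  have hslope := one_sub_half_le_rpow_sub_two hε0.le ht0.le (by nlinarith) hpt
  refine ⟨?_, by linarith, by linarith⟩
  rw [abs_of_pos (by nlinarith)]
  exact neg_one_add_div_le_neg_half (by linarith) hslope

/-- The algebraic slope comparison along the barrier curve `z = -k w^{q-p+2}`:
the slope of the vector field is strictly below the slope of the barrier curve. -/
theorem barrier_slope_comparison (n : ℕ) (hn : 2 ≤ n) (p q ε k δ : ℝ)
    (hp1 : 1 < p) (hpn : p < n)
    (hq : q = (n : ℝ) * (p - 1) / ((n : ℝ) - p))
    (hε0 : 0 < ε) (hε1 : ε < 1)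
    (hk : k = 1 / ((p - 1) * (1 - ε)))
    (hδ : δ = (if p = 2 then 1 / (4 * (q - p + 2))
        else min (1 / (2 ^ p * |p - 2|)) (1 / (4 * (q - p + 2)))) * ε)
    (w z : ℝ) (hw0 : 0 < w)
    (hw1 : w ≤ (δ / k) ^ (((n : ℝ) - p) / (p * (p - 1))))
    (hz : z = -k * w ^ (q - p + 2)) :
    -1 + (1 - ε) / |1 - k * w ^ (q - p + 1)| ^ (p - 2) ≤ -ε / 2 ∧
    -ε / 2 < -ε / 4 ∧
    -ε / 4 ≤ -k * (q - p + 2) * w ^ (q - p + 1) :=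
  barrier_slope_comparison_general n p q ε k δ hp1 hpn hq hε0 hε1 hk hδ w hw0 hw1
end
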